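/- There exists a mixed tiling m of the 4×4×6 box that does not correspond to any slab tiling: there is no slab tiling t of the 4×4×6 box such that every horizontal slab of t is an element of m and every vertical slab of t is the union of two vertical dominoes of m. -/

import Mathlib

/-- A slab: an axis-aligned 2×2×1 block of four cells of ℤ³. -/
def IsSlab (S : Set (ℤ × ℤ × ℤ)) : Prop :=
  (∃ x y z : ℤ, S = {(x, y, z), (x + 1, y, z), (x, y + 1, z), (x + 1, y + 1, z)}) ∨
  (∃ x y z : ℤ, S = {(x, y, z), (x + 1, y, z), (x, y, z + 1), (x + 1, y, z + 1)}) ∨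
  (∃ x y z : ℤ, S = {(x, y, z), (x, y + 1, z), (x, y, z + 1), (x, y + 1, z + 1)})

/-- A slab tiling of a region `R ⊆ ℤ³`: a partition of `R` into slabs. -/
def IsSlabTiling (R : Set (ℤ × ℤ × ℤ)) (t : Set (Set (ℤ × ℤ × ℤ))) : Prop :=
  (∀ S ∈ t, IsSlab S) ∧
  (∀ S ∈ t, ∀ S' ∈ t, S ≠ S' → Disjoint S S') ∧
  ⋃₀ t = R

/-- A 2×2×2 block of eight cells of ℤ³. -/
def IsBlock222 (B : Set (ℤ × ℤ × ℤ)) : Prop :=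
  ∃ x y z : ℤ, B = {(x, y, z), (x + 1, y, z), (x, y + 1, z), (x + 1, y + 1, z),
    (x, y, z + 1), (x + 1, y, z + 1), (x, y + 1, z + 1), (x + 1, y + 1, z + 1)}

/-- Two tilings differ by a flip. -/
def Flip (t t' : Set (Set (ℤ × ℤ × ℤ))) : Prop :=
  ∃ P₁ P₂ P₁' P₂' : Set (ℤ × ℤ × ℤ),
    P₁ ∈ t ∧ P₂ ∈ t ∧ P₁' ∈ t' ∧ P₂' ∈ t' ∧
    t \ {P₁, P₂} = t' \ {P₁', P₂'} ∧
    P₁ ∪ P₂ = P₁' ∪ P₂' ∧ IsBlock222 (P₁ ∪ P₂)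

/-- The L×M×N box of cells {0,…,L−1}×{0,…,M−1}×{0,…,N−1}. -/
def Box (L M N : ℤ) : Set (ℤ × ℤ × ℤ) :=
  {p | 0 ≤ p.1 ∧ p.1 < L ∧ 0 ≤ p.2.1 ∧ p.2.1 < M ∧ 0 ≤ p.2.2 ∧ p.2.2 < N}

/-- A horizontal slab. -/
def IsHorizSlab (S : Set (ℤ × ℤ × ℤ)) : Prop :=
  ∃ x y z : ℤ, S = {(x, y, z), (x + 1, y, z), (x, y + 1, z), (x + 1, y + 1, z)}

/-- A vertical slab. -/
def IsVertSlab (S : Set (ℤ × ℤ × ℤ)) : Prop :=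
  (∃ x y z : ℤ, S = {(x, y, z), (x + 1, y, z), (x, y, z + 1), (x + 1, y, z + 1)}) ∨
  (∃ x y z : ℤ, S = {(x, y, z), (x, y + 1, z), (x, y, z + 1), (x, y + 1, z + 1)})

/-- A vertical domino. -/
def IsVertDomino (S : Set (ℤ × ℤ × ℤ)) : Prop :=
  ∃ x y z : ℤ, S = {(x, y, z), (x, y, z + 1)}

/-- A mixed tiling: a partition into horizontal slabs and vertical dominoes. -/
def IsMixedTiling (R : Set (ℤ × ℤ × ℤ)) (m : Set (Set (ℤ × ℤ × ℤ))) : Prop :=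
  (∀ S ∈ m, IsHorizSlab S ∨ IsVertDomino S) ∧
  (∀ S ∈ m, ∀ S' ∈ m, S ≠ S' → Disjoint S S') ∧
  ⋃₀ m = R

/-!
If a slab tiling `t` is compatible with a mixed tiling `m`, every slab of `t` is a union of pieces
of `m` (a horizontal slab is a piece, a vertical one is two dominoes), so it contains every piece of
`m` that it meets. In the mixed tiling `exoticPieces` below, each of the (at most twelve) slabs of
the box through the cell `(0, 0, 2)` meets some piece without containing it, so no slab of `t` can
cover that cell.
-/

abbrev Cell := ℤ × ℤ × ℤ

def IsSaturated {α : Type*} (m : Set (Set α)) (S : Set α) : Prop :=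
  ∀ F ∈ m, (F ∩ S).Nonempty → F ⊆ S

theorem isSaturated_sUnion {α : Type*} {m s : Set (Set α)} (hm : m.Pairwise Disjoint)
    (hs : s ⊆ m) : IsSaturated m (⋃₀ s) := by
  rintro F hF ⟨p, hpF, G, hG, hpG⟩
  obtain rfl : F = G := by
    by_contra hne
    exact Set.disjoint_left.1 (hm hF (hs hG) hne) hpF hpG
  exact Set.subset_sUnion_of_mem hG

theorem isSaturated_of_isSlab {m : Set (Set Cell)} (hm : m.Pairwise Disjoint) {S : Set Cell}
    (hS : IsSlab S) (hH : IsHorizSlab S → S ∈ m)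
    (hV : IsVertSlab S → ∃ d₁ ∈ m, ∃ d₂ ∈ m, S = d₁ ∪ d₂) : IsSaturated m S := by
  rcases (hS : IsHorizSlab S ∨ IsVertSlab S) with h | h
  · simpa using isSaturated_sUnion hm (Set.singleton_subset_iff.2 (hH h))
  · obtain ⟨d₁, h₁, d₂, h₂, rfl⟩ := hV h
    simpa using isSaturated_sUnion hm (Set.pair_subset h₁ h₂)

def shapeAt (s : List Cell) (p : Cell) : Finset Cell := (s.map (p + ·)).toFinset

def horizSlabShape : List Cell := [0, (1, 0, 0), (0, 1, 0), (1, 1, 0)]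
def vertDominoShape : List Cell := [0, (0, 0, 1)]

def slabShapes : List (List Cell) :=
  [horizSlabShape, [0, (1, 0, 0), (0, 0, 1), (1, 0, 1)], [0, (0, 1, 0), (0, 0, 1), (0, 1, 1)]]

theorem mem_shapeAt {s : List Cell} {p q : Cell} : q ∈ shapeAt s p ↔ ∃ o ∈ s, p + o = q := by
  simp only [shapeAt, List.mem_toFinset, List.mem_map]

theorem IsSlab.exists_eq_shapeAt {S : Set Cell} (hS : IsSlab S) :
    ∃ s ∈ slabShapes, ∃ p, S = shapeAt s p := by
  rcases hS with ⟨x, y, z, rfl⟩ | ⟨x, y, z, rfl⟩ | ⟨x, y, z, rfl⟩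
  · exact ⟨horizSlabShape, by simp [slabShapes], (x, y, z), by simp [shapeAt, horizSlabShape]⟩
  · exact ⟨[0, (1, 0, 0), (0, 0, 1), (1, 0, 1)], by simp [slabShapes], (x, y, z), by simp [shapeAt]⟩
  · exact ⟨[0, (0, 1, 0), (0, 0, 1), (0, 1, 1)], by simp [slabShapes], (x, y, z), by simp [shapeAt]⟩

def slabsThrough (c : Cell) : List (Finset Cell) :=
  slabShapes.flatMap fun s => s.map fun o => shapeAt s (c - o)

theorem IsSlab.exists_mem_slabsThrough {S : Set Cell} (hS : IsSlab S) {c : Cell} (hc : c ∈ S) :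
    ∃ T ∈ slabsThrough c, S = T := by
  obtain ⟨s, hs, p, rfl⟩ := hS.exists_eq_shapeAt
  obtain ⟨o, ho, rfl⟩ : ∃ o ∈ s, p + o = c := mem_shapeAt.1 hc
  exact ⟨shapeAt s p, List.mem_flatMap.2 ⟨s, hs, List.mem_map.2 ⟨o, ho, by simp⟩⟩, rfl⟩

theorem box_eq_coe_finset (L M N : ℤ) :
    Box L M N = ↑(Finset.Ico 0 L ×ˢ Finset.Ico 0 M ×ˢ Finset.Ico 0 N) := by
  ext
  simp [Box, and_assoc]

def setOfPieces (L : List (Finset Cell)) : Set (Set Cell) := {S | ∃ F ∈ L, S = F}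

theorem IsSaturated.finset_subset {L : List (Finset Cell)} {T : Finset Cell}
    (hT : IsSaturated (setOfPieces L) T) {F : Finset Cell} (hF : F ∈ L) (hFT : ¬ Disjoint F T) :
    F ⊆ T := by
  rw [← Finset.coe_subset]
  refine hT F ⟨F, hF, rfl⟩ ?_
  simpa [← Finset.coe_inter, Finset.not_disjoint_iff_nonempty_inter] using hFT

theorem isMixedTiling_setOfPieces {R : Set Cell} {L : List (Finset Cell)}
    (hshape : ∀ F ∈ L, IsHorizSlab (F : Set Cell) ∨ IsVertDomino (F : Set Cell))
    (hdisj : L.Pairwise Disjoint) (hsub : ∀ F ∈ L, (F : Set Cell) ⊆ R)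
    (hcover : ∀ p ∈ R, ∃ F ∈ L, p ∈ F) : IsMixedTiling R (setOfPieces L) := by
  refine ⟨?_, ?_, ?_⟩
  · rintro _ ⟨F, hF, rfl⟩
    exact hshape F hF
  · rintro _ ⟨F, hF, rfl⟩ _ ⟨F', hF', rfl⟩ hne
    exact Finset.disjoint_coe.2 (hdisj.forall hF hF' (by rintro rfl; exact hne rfl))
  · refine subset_antisymm (Set.sUnion_subset ?_) fun p hp => ?_
    · rintro _ ⟨F, hF, rfl⟩
      exact hsub F hF
    · obtain ⟨F, hF, hpF⟩ := hcover p hp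
      exact ⟨F, ⟨F, hF, rfl⟩, hpF⟩

theorem isHorizSlab_shapeAt : ∀ p, IsHorizSlab (shapeAt horizSlabShape p : Set Cell)
  | (x, y, z) => ⟨x, y, z, by simp [shapeAt, horizSlabShape]⟩

theorem isVertDomino_shapeAt : ∀ p, IsVertDomino (shapeAt vertDominoShape p : Set Cell)
  | (x, y, z) => ⟨x, y, z, by simp [shapeAt, vertDominoShape]⟩

def exoticPieces : List (Finset Cell) :=
  [(1, 0, 0), (1, 2, 0), (1, 1, 1), (0, 1, 2), (0, 1, 3), (1, 1, 4), (1, 0, 5), (1, 2, 5)].map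
      (shapeAt horizSlabShape) ++
    [(0, 0, 0), (0, 0, 2), (0, 0, 4), (0, 3, 0), (0, 3, 2), (0, 3, 4),
      (3, 0, 0), (3, 0, 2), (3, 0, 4), (3, 1, 0), (3, 1, 2), (3, 1, 4),
      (3, 2, 0), (3, 2, 2), (3, 2, 4), (3, 3, 0), (3, 3, 2), (3, 3, 4),
      (0, 1, 0), (0, 1, 4), (0, 2, 0), (0, 2, 4),
      (1, 0, 1), (1, 0, 3), (1, 3, 1), (1, 3, 3), (2, 0, 1), (2, 0, 3), (2, 3, 1), (2, 3, 3),
      (2, 1, 2), (2, 2, 2)].map (shapeAt vertDominoShape)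

theorem exoticPieces_pairwise_disjoint : exoticPieces.Pairwise Disjoint := by
  decide

theorem exoticPieces_subset :
    ∀ F ∈ exoticPieces, F ⊆ Finset.Ico 0 4 ×ˢ Finset.Ico 0 4 ×ˢ Finset.Ico 0 6 := by
  decide

set_option maxRecDepth 10000 in
theorem exoticPieces_cover :
    ∀ p ∈ Finset.Ico 0 4 ×ˢ Finset.Ico 0 4 ×ˢ Finset.Ico 0 6,
      ∃ F ∈ exoticPieces, p ∈ F := by
  decide

theorem exists_exoticPiece_crossing :
    ∀ T ∈ slabsThrough (0, 0, 2), T ⊆ Finset.Ico 0 4 ×ˢ Finset.Ico 0 4 ×ˢ Finset.Ico 0 6 →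
      ∃ F ∈ exoticPieces, ¬ Disjoint F T ∧ ¬ F ⊆ T := by
  decide

theorem isMixedTiling_exoticPieces : IsMixedTiling (Box 4 4 6) (setOfPieces exoticPieces) := by
  rw [box_eq_coe_finset]
  refine isMixedTiling_setOfPieces ?_ exoticPieces_pairwise_disjoint
    (fun F hF => Finset.coe_subset.2 (exoticPieces_subset F hF)) exoticPieces_cover
  simp only [exoticPieces, List.mem_append, List.mem_map]
  rintro _ (⟨p, -, rfl⟩ | ⟨p, -, rfl⟩)
  exacts [Or.inl (isHorizSlab_shapeAt p), Or.inr (isVertDomino_shapeAt p)]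

theorem mixed_tiling_not_from_slab_tiling :
    ∃ m : Set (Set (ℤ × ℤ × ℤ)), IsMixedTiling (Box 4 4 6) m ∧
      ¬ ∃ t : Set (Set (ℤ × ℤ × ℤ)), IsSlabTiling (Box 4 4 6) t ∧
        (∀ S ∈ t, IsHorizSlab S → S ∈ m) ∧
        (∀ S ∈ t, IsVertSlab S →
          ∃ d₁ ∈ m, ∃ d₂ ∈ m, IsVertDomino d₁ ∧ IsVertDomino d₂ ∧ S = d₁ ∪ d₂) := by
  refine ⟨setOfPieces exoticPieces, isMixedTiling_exoticPieces, ?_⟩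
  rintro ⟨t, ⟨hslab, -, hcover⟩, hH, hV⟩
  obtain ⟨S, hSt, hcS⟩ : ∃ S ∈ t, ((0, 0, 2) : Cell) ∈ S := by
    simp [← Set.mem_sUnion, hcover, Box]
  obtain ⟨T, hT, rfl⟩ := (hslab S hSt).exists_mem_slabsThrough hcS
  have hTbox : T ⊆ Finset.Ico 0 4 ×ˢ Finset.Ico 0 4 ×ˢ Finset.Ico 0 6 := by
    rw [← Finset.coe_subset, ← box_eq_coe_finset, ← hcover]
    exact Set.subset_sUnion_of_mem hSt
  have hsat : IsSaturated (setOfPieces exoticPieces) T :=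
    isSaturated_of_isSlab isMixedTiling_exoticPieces.2.1 (hslab _ hSt) (hH _ hSt) fun h => by
      obtain ⟨d₁, h₁, d₂, h₂, -, -, hd⟩ := hV _ hSt h
      exact ⟨d₁, h₁, d₂, h₂, hd⟩
  obtain ⟨F, hF, hFT, hFT'⟩ := exists_exoticPiece_crossing T hT hTbox
  exact hFT' (hsat.finset_subset hF hFT)
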